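/- Define F^d_m(P) = [K A_m'(P) + B_m'(P)]/[(K+1) B_m'(P)] where A_m'(P) = Σ_{|S|=m} A_S'(P) and B_m'(P) = Σ_{|S|=m} B_S'(P) for a rank-K projector P on (C^D)^{⊗n}. Then (K+1)F^d_{n−m}(P) − 1 = 1/[(K+1)F^d_m(P) − 1]; in particular F^d_{n/2}(P) = 2/(K+1) when n is even. -/

import Mathlib

open Matrix

noncomputable section

/-- Interleave a configuration on the qudits in `S` with one on the complement. -/
def glue {n : ℕ} {α : Type*} (S : Finset (Fin n)) (u : {i // i ∈ S} → α)
    (v : {i // i ∉ S} → α) : Fin n → α :=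
  fun i => if h : i ∈ S then u ⟨i, h⟩ else v ⟨i, h⟩

/-- Partial trace over the qudits indexed by `S` of an operator on `(ℂ^α)^{⊗n}`. -/
def ptr {n : ℕ} {α : Type*} [Fintype α] (S : Finset (Fin n))
    (M : Matrix (Fin n → α) (Fin n → α) ℂ) :
    Matrix ({i // i ∉ S} → α) ({i // i ∉ S} → α) ℂ :=
  fun v w => ∑ u : {i : Fin n // i ∈ S} → α, M (glue S u v) (glue S u w)

/-- Rains enumerator `A_S'(P) = K⁻² tr_S[(tr_{S'}P)²]` (a real quantity). -/
def Arains {n D : ℕ} (K : ℕ) (S : Finset (Fin n))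
    (P : Matrix (Fin n → Fin D) (Fin n → Fin D) ℂ) : ℝ :=
  (1 / (K : ℝ) ^ 2) * ((ptr Sᶜ P * ptr Sᶜ P).trace).re

/-- Rains enumerator `B_S'(P) = K⁻¹ tr_{S'}[(tr_S P)²]` (a real quantity). -/
def Brains {n D : ℕ} (K : ℕ) (S : Finset (Fin n))
    (P : Matrix (Fin n → Fin D) (Fin n → Fin D) ℂ) : ℝ :=
  (1 / (K : ℝ)) * ((ptr S P * ptr S P).trace).re

/-- Rains enumerator `A_m'(P) = Σ_{|S|=m} A_S'(P)`. -/
def Am {n D : ℕ} (K : ℕ) (m : ℕ)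
    (P : Matrix (Fin n → Fin D) (Fin n → Fin D) ℂ) : ℝ :=
  ∑ S ∈ Finset.univ.filter (fun S : Finset (Fin n) => S.card = m), Arains K S P

/-- Rains enumerator `B_m'(P) = Σ_{|S|=m} B_S'(P)`. -/
def Bm {n D : ℕ} (K : ℕ) (m : ℕ)
    (P : Matrix (Fin n → Fin D) (Fin n → Fin D) ℂ) : ℝ :=
  ∑ S ∈ Finset.univ.filter (fun S : Finset (Fin n) => S.card = m), Brains K S P

/-- Transmission fidelity on `m` qudits under error detection,
`F^d_m(P) = [K·A_m'(P) + B_m'(P)] / [(K+1)·B_m'(P)]`. -/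
def Fdet {n D : ℕ} (K : ℕ) (m : ℕ)
    (P : Matrix (Fin n → Fin D) (Fin n → Fin D) ℂ) : ℝ :=
  ((K : ℝ) * Am K m P + Bm K m P) / (((K : ℝ) + 1) * Bm K m P)

lemma glue_eq {n : ℕ} {α : Type*} (S : Finset (Fin n)) (u v) :
    glue S u v = (Equiv.piEquivPiSubtypeProd (· ∈ S) (fun _ => α)).symm (u, v) := rfl

lemma trace_ptr {n : ℕ} {α : Type*} [Fintype α] (S : Finset (Fin n))
    (M : Matrix (Fin n → α) (Fin n → α) ℂ) : (ptr S M).trace = M.trace := by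
  classical
  unfold Matrix.trace ptr Matrix.diag
  simp only []
  rw [← Equiv.sum_comp (Equiv.piEquivPiSubtypeProd (· ∈ S) (fun _ => α)).symm
    (fun x => M x x)]
  rw [Fintype.sum_prod_type]
  rw [Finset.sum_comm]
  rfl

lemma ptr_herm {n : ℕ} {α : Type*} [Fintype α] (S : Finset (Fin n))
    {M : Matrix (Fin n → α) (Fin n → α) ℂ} (hM : M.IsHermitian) :
    (ptr S M).IsHermitian := by
  ext v w
  simp only [conjTranspose_apply, ptr, star_sum]
  refine Finset.sum_congr rfl fun u _ => ?_
  exact congrFun (congrFun hM _) _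

lemma trace_sq_re_pos {ι : Type*} [Fintype ι] {M : Matrix ι ι ℂ}
    (hM : M.IsHermitian) (h0 : M.trace ≠ 0) : 0 < ((M * M).trace).re := by
  have hs : ∀ i j, M j i = star (M i j) := by
    intro i j
    conv_lhs => rw [← hM]
    simp [conjTranspose_apply]
  have key : ((M * M).trace).re = ∑ i, ∑ j, Complex.normSq (M i j) := by
    simp only [Matrix.trace, Matrix.diag, Matrix.mul_apply, Complex.re_sum]
    refine Finset.sum_congr rfl fun i _ => Finset.sum_congr rfl fun j _ => ?_
    rw [hs i j, Complex.star_def, Complex.mul_conj]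
    simp
  rw [key]
  obtain ⟨i, _, hi⟩ := Finset.exists_ne_zero_of_sum_ne_zero h0
  refine Finset.sum_pos' (fun i _ => Finset.sum_nonneg fun j _ => Complex.normSq_nonneg _)
    ⟨i, Finset.mem_univ _, ?_⟩
  refine Finset.sum_pos' (fun j _ => Complex.normSq_nonneg _)
    ⟨i, Finset.mem_univ _, ?_⟩
  simpa [Complex.normSq_pos] using hi

variable {n D : ℕ}

lemma ptr_trace_ne {K : ℕ} (hK : 1 ≤ K) (S : Finset (Fin n))
    {P : Matrix (Fin n → Fin D) (Fin n → Fin D) ℂ} (hPtr : P.trace = (K : ℂ)) :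
    (ptr S P).trace ≠ 0 := by
  rw [trace_ptr, hPtr]
  exact_mod_cast Nat.cast_ne_zero.mpr (by omega)

lemma Brains_pos {K : ℕ} (hK : 1 ≤ K) (S : Finset (Fin n))
    {P : Matrix (Fin n → Fin D) (Fin n → Fin D) ℂ}
    (hPherm : P.IsHermitian) (hPtr : P.trace = (K : ℂ)) : 0 < Brains K S P := by
  have hKpos : (0:ℝ) < K := by exact_mod_cast hK
  exact mul_pos (by positivity)
    (trace_sq_re_pos (ptr_herm S hPherm) (ptr_trace_ne hK S hPtr))

lemma Arains_pos {K : ℕ} (hK : 1 ≤ K) (S : Finset (Fin n))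
    {P : Matrix (Fin n → Fin D) (Fin n → Fin D) ℂ}
    (hPherm : P.IsHermitian) (hPtr : P.trace = (K : ℂ)) : 0 < Arains K S P := by
  have hKpos : (0:ℝ) < K := by exact_mod_cast hK
  exact mul_pos (by positivity)
    (trace_sq_re_pos (ptr_herm Sᶜ hPherm) (ptr_trace_ne hK Sᶜ hPtr))

lemma Brains_eq_comp {K : ℕ} (hK : 1 ≤ K) (S : Finset (Fin n))
    (P : Matrix (Fin n → Fin D) (Fin n → Fin D) ℂ) :
    Brains K S P = (K : ℝ) * Arains K Sᶜ P := by
  have hKne : (K:ℝ) ≠ 0 := by exact_mod_cast (by omega : K ≠ 0)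
  unfold Brains Arains
  rw [compl_compl]
  field_simp

lemma filter_card_nonempty {m : ℕ} (hm : m ≤ n) :
    (Finset.univ.filter (fun S : Finset (Fin n) => S.card = m)).Nonempty := by
  obtain ⟨t, _, ht⟩ := Finset.exists_subset_card_eq (s := (Finset.univ : Finset (Fin n))) (n := m)
    (by simpa using hm)
  exact ⟨t, by simp [ht]⟩

lemma Am_pos {K : ℕ} (hK : 1 ≤ K) {m : ℕ} (hm : m ≤ n)
    {P : Matrix (Fin n → Fin D) (Fin n → Fin D) ℂ}
    (hPherm : P.IsHermitian) (hPtr : P.trace = (K : ℂ)) : 0 < Am K m P :=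
  Finset.sum_pos (fun S _ => Arains_pos hK S hPherm hPtr) (filter_card_nonempty hm)

lemma Bm_pos {K : ℕ} (hK : 1 ≤ K) {m : ℕ} (hm : m ≤ n)
    {P : Matrix (Fin n → Fin D) (Fin n → Fin D) ℂ}
    (hPherm : P.IsHermitian) (hPtr : P.trace = (K : ℂ)) : 0 < Bm K m P :=
  Finset.sum_pos (fun S _ => Brains_pos hK S hPherm hPtr) (filter_card_nonempty hm)

lemma Bm_eq {K : ℕ} (hK : 1 ≤ K) {m : ℕ} (hm : m ≤ n)
    (P : Matrix (Fin n → Fin D) (Fin n → Fin D) ℂ) :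
    Bm K m P = (K : ℝ) * Am K (n - m) P := by
  unfold Bm Am
  rw [Finset.mul_sum]
  refine Finset.sum_bij' (fun S _ => Sᶜ) (fun T _ => Tᶜ) ?_ ?_ ?_ ?_ ?_
  · intro S hS
    simp only [Finset.mem_filter, Finset.mem_univ, true_and] at hS ⊢
    rw [Finset.card_compl, hS]; simp
  · intro T hT
    simp only [Finset.mem_filter, Finset.mem_univ, true_and] at hT ⊢
    rw [Finset.card_compl, hT]; simp; omega
  · intro S _; simp
  · intro T _; simp
  · intro S _; exact Brains_eq_comp hK S P

/-- `(K+1)F^d_{n−m}(P) − 1 = 1/[(K+1)F^d_m(P) − 1]`; in particular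
`F^d_{n/2}(P) = 2/(K+1)` when `n` is even. -/
theorem stmt_14 (n D K : ℕ) (hD : 2 ≤ D) (hK : 1 ≤ K)
    (P : Matrix (Fin n → Fin D) (Fin n → Fin D) ℂ)
    (hPherm : P.IsHermitian) (hPidem : P * P = P) (hPtr : P.trace = (K : ℂ))
    (m : ℕ) (hm : m ≤ n) :
    ((K : ℝ) + 1) * Fdet K (n - m) P - 1 = 1 / (((K : ℝ) + 1) * Fdet K m P - 1) ∧
      (Even n → Fdet K (n / 2) P = 2 / ((K : ℝ) + 1)) := by
  have hKpos : (0:ℝ) < K := by exact_mod_cast hK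
  have hKne : (K:ℝ) ≠ 0 := ne_of_gt hKpos
  have hK1 : (K:ℝ) + 1 ≠ 0 := by positivity
  have key : ∀ m' : ℕ, m' ≤ n →
      ((K : ℝ) + 1) * Fdet K m' P - 1 = Am K m' P / Am K (n - m') P := by
    intro m' hm'
    have ha' := Am_pos hK (Nat.sub_le n m') hPherm hPtr (P := P)
    unfold Fdet
    rw [Bm_eq hK hm']
    field_simp
    ring
  constructor
  · rw [key m hm, key (n - m) (Nat.sub_le n m), Nat.sub_sub_self hm, one_div_div]
  · intro hn
    obtain ⟨k, hk⟩ := hn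
    have hhalf : n - n / 2 = n / 2 := by omega
    have hle : n / 2 ≤ n := Nat.div_le_self n 2
    have ha := Am_pos hK hle hPherm hPtr (P := P)
    unfold Fdet
    rw [Bm_eq hK hle, hhalf]
    field_simp
    ring

end
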